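/- arXiv:2405.14499 — 2 statements merged into one kernel-verified Lean document; each statement's English description precedes it below -/
import Mathlib

section
/- (Theorem 2.) Let T ≥ 3 and consider any instance of model M with S_i = 0 for all i ∈ I', R = 0, C > 0, B > 0, E_i > 0 for all i ∈ I', d_{ij} > 0 for all i, j ∈ I with i ≠ j, Q ≥ B Σ_{i∈I'} E_i, M ≥ Q, π^n > 0 for every node n, and accumulation rates given, for constants α_i ∈ (0,1) and ε_i ∈ (0, α_i] (i ∈ I'), by a_i^n = 0 for all n ∈ N^t with 2 ≤ t ≤ T−2, a_i^n = α_i for all n ∈ N^{T−1}, and a_i^n = 1 − α_i + ε_i for all n ∈ N^T. Then model M is feasible (so z* > −∞), while every execution of the rolling horizon approach with window W = 1 encounters an infeasible subproblem, so that z^{RH,1} = −∞. -/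
/-- A scenario tree over stages `1,…,T`: finite nonempty node sets `N t`,
a singleton root stage, a parent map, and node probabilities with
`π(root) = 1` and the conservation property. -/
structure ScenarioTree (T : ℕ) where
  N : ℕ → Finset ℕ
  pa : ℕ → ℕ → ℕ
  prob : ℕ → ℕ → ℝ
  root : ℕ
  hroot : N 1 = {root}
  hne : ∀ t, 1 ≤ t → t ≤ T → (N t).Nonempty
  hpa : ∀ t, 2 ≤ t → t ≤ T → ∀ n ∈ N t, pa t n ∈ N (t - 1)
  hprob_nonneg : ∀ t, 1 ≤ t → t ≤ T → ∀ n ∈ N t, 0 ≤ prob t n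
  hprob_root : prob 1 root = 1
  hprob_sum : ∀ t, 2 ≤ t → t ≤ T → ∀ m ∈ N (t - 1),
    prob (t - 1) m = ∑ n ∈ (N t).filter (fun n => pa t n = m), prob t n

/-- Data of the multi-stage stochastic waste collection model `M`:
`N`b bins (`I' = {1,…,Nb}`, depot `0`, `I = {0,…,Nb}`), a scenario tree over
stages `1,…,T`, accumulation rates `a i t n ∈ [0,1]`, nonnegative reals
`C, R, Q, B, Mbig`, distances `d`, bin capacities `E` and initial fill
fractions `S`. -/
structure ModelM where
  T : ℕ
  hT : 2 ≤ T
  tree : ScenarioTree T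
  Nb : ℕ
  hNb : 1 ≤ Nb
  a : ℕ → ℕ → ℕ → ℝ
  ha : ∀ i ∈ Finset.Icc 1 Nb, ∀ t, 2 ≤ t → t ≤ T → ∀ n ∈ tree.N t,
    0 ≤ a i t n ∧ a i t n ≤ 1
  C : ℝ
  R : ℝ
  Q : ℝ
  B : ℝ
  Mbig : ℝ
  hC : 0 ≤ C
  hR : 0 ≤ R
  hQ : 0 ≤ Q
  hB : 0 ≤ B
  hMbig : 0 ≤ Mbig
  d : ℕ → ℕ → ℝ
  hd : ∀ i ∈ Finset.Icc 0 Nb, ∀ j ∈ Finset.Icc 0 Nb, i ≠ j → 0 ≤ d i j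
  E : ℕ → ℝ
  S : ℕ → ℝ
  hE : ∀ i ∈ Finset.Icc 1 Nb, 0 ≤ E i
  hS : ∀ i ∈ Finset.Icc 1 Nb, 0 ≤ S i ∧ S i ≤ 1

namespace ModelM

/-- The vertex set `I = {0,1,…,N}` (depot and bins). -/
def Iall (P : ModelM) : Finset ℕ := Finset.Icc 0 P.Nb

/-- The bin set `I' = {1,…,N}`. -/
def Ibins (P : ModelM) : Finset ℕ := Finset.Icc 1 P.Nb

end ModelM

/-- A (candidate) solution of model `M`: routing variables `x i j t`, visit
variables `y i t`, flows `f i j t n`, collected amounts `w i t n` and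
inventories `u i t n` (node `n` at stage `t`). -/
structure Sol where
  x : ℕ → ℕ → ℕ → ℝ
  y : ℕ → ℕ → ℝ
  f : ℕ → ℕ → ℕ → ℕ → ℝ
  w : ℕ → ℕ → ℕ → ℝ
  u : ℕ → ℕ → ℕ → ℝ

/-- Feasibility of a solution for the constraints of model `M` restricted to
the stage window `k,…,l`, with the stage-`k` inventories fixed to `v`:
the binariness of `x, y` for `k ≤ t ≤ l-1`, nonnegativity of `f, w, u`, and
constraints (C1)–(C10), (C12), (C13) for `k+1 ≤ t ≤ l` and (C6)–(C8) for
`k ≤ t ≤ l-1`; `(C11)` is replaced by `u i k n = v i n`.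
The full model `M` is the case `k = 1`, `l = T`, `v i n = E i * B * S i`. -/
def FeasOn (P : ModelM) (k l : ℕ) (v : ℕ → ℕ → ℝ) (s : Sol) : Prop :=
  (∀ i ∈ P.Ibins, ∀ n ∈ P.tree.N k, s.u i k n = v i n) ∧
  (∀ t, k ≤ t → t + 1 ≤ l → ∀ i ∈ P.Iall, ∀ j ∈ P.Iall, i ≠ j →
    (s.x i j t = 0 ∨ s.x i j t = 1)) ∧
  (∀ t, k ≤ t → t + 1 ≤ l → ∀ i ∈ P.Ibins, (s.y i t = 0 ∨ s.y i t = 1)) ∧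
  (∀ t, k + 1 ≤ t → t ≤ l → ∀ n ∈ P.tree.N t, ∀ i ∈ P.Ibins, ∀ j ∈ P.Iall, i ≠ j →
    0 ≤ s.f i j t n) ∧
  (∀ t, k + 1 ≤ t → t ≤ l → ∀ n ∈ P.tree.N t, ∀ i ∈ P.Ibins, 0 ≤ s.w i t n) ∧
  (∀ t, k ≤ t → t ≤ l → ∀ n ∈ P.tree.N t, ∀ i ∈ P.Ibins, 0 ≤ s.u i t n) ∧
  -- (C1)
  (∀ t, k + 1 ≤ t → t ≤ l → ∀ n ∈ P.tree.N t, ∀ i ∈ P.Ibins,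
    (∑ j ∈ P.Iall.erase i, s.f i j t n) - (∑ j ∈ P.Ibins.erase i, s.f j i t n)
      = s.w i t n) ∧
  -- (C2)
  (∀ t, k + 1 ≤ t → t ≤ l → ∀ n ∈ P.tree.N t, ∀ i ∈ P.Ibins, ∀ j ∈ P.Ibins, i ≠ j →
    s.f i j t n ≤ (P.Q - P.E j * P.B * P.a j t n) * s.x i j (t - 1)) ∧
  -- (C3)
  (∀ t, k + 1 ≤ t → t ≤ l → ∀ n ∈ P.tree.N t, ∀ i ∈ P.Ibins,
    s.f i 0 t n ≤ P.Q * s.x i 0 (t - 1)) ∧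
  -- (C4)
  (∀ t, k + 1 ≤ t → t ≤ l → ∀ n ∈ P.tree.N t, ∀ i ∈ P.Ibins, ∀ j ∈ P.Ibins, i ≠ j →
    s.f i j t n ≤ P.Q - s.w j t n) ∧
  -- (C5)
  (∀ t, k + 1 ≤ t → t ≤ l → ∀ n ∈ P.tree.N t, ∀ i ∈ P.Ibins, ∀ j ∈ P.Iall, i ≠ j →
    s.w i t n - P.Mbig * (1 - s.x i j (t - 1)) ≤ s.f i j t n) ∧
  -- (C6)
  (∀ t, k ≤ t → t + 1 ≤ l → ∀ i ∈ P.Ibins,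
    ∑ j ∈ P.Iall.erase i, s.x i j t = s.y i t) ∧
  -- (C7)
  (∀ t, k ≤ t → t + 1 ≤ l → ∀ j ∈ P.Ibins,
    ∑ i ∈ P.Iall.erase j, s.x i j t = s.y j t) ∧
  -- (C8)
  (∀ t, k ≤ t → t + 1 ≤ l →
    ∑ i ∈ P.Ibins, s.x i 0 t = ∑ j ∈ P.Ibins, s.x 0 j t) ∧
  -- (C9)
  (∀ t, k + 1 ≤ t → t ≤ l → ∀ n ∈ P.tree.N t, ∀ i ∈ P.Ibins,
    s.w i t n ≤ P.E i * P.B * s.y i (t - 1)) ∧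
  -- (C10)
  (∀ t, k + 1 ≤ t → t ≤ l → ∀ n ∈ P.tree.N t, ∀ i ∈ P.Ibins,
    s.u i t n ≤ P.Mbig * (1 - s.y i (t - 1))) ∧
  -- (C12)
  (∀ t, k + 1 ≤ t → t ≤ l → ∀ n ∈ P.tree.N t, ∀ i ∈ P.Ibins,
    s.u i t n = s.u i (t - 1) (P.tree.pa t n) + P.E i * P.B * P.a i t n - s.w i t n) ∧
  -- (C13)
  (∀ t, k + 1 ≤ t → t ≤ l → ∀ n ∈ P.tree.N t, ∀ i ∈ P.Ibins,
    s.u i (t - 1) (P.tree.pa t n) ≤ (1 - P.a i t n) * (P.E i * P.B))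

/-- Objective of the subproblem on the stage window `k,…,l`:
expected revenue over stages `k+1,…,l` minus travel costs over stages
`k,…,l-1`.  The profit of model `M` is the case `k = 1`, `l = T`. -/
def subObj (P : ModelM) (k l : ℕ) (s : Sol) : ℝ :=
  P.R * ∑ t ∈ Finset.Icc (k + 1) l, ∑ n ∈ P.tree.N t,
      P.tree.prob t n * ∑ i ∈ P.Ibins, s.w i t n
  - P.C * ∑ t ∈ Finset.Icc k (l - 1), ∑ i ∈ P.Iall,
      ∑ j ∈ P.Iall.erase i, P.d i j * s.x i j t

/-- Feasibility for the full model `M` (stages `1,…,T`, `u i root = E i B S i`). -/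
def Feasible (P : ModelM) (s : Sol) : Prop :=
  FeasOn P 1 P.T (fun i _ => P.E i * P.B * P.S i) s

/-- The profit `z` of a solution of model `M`. -/
def profit (P : ModelM) (s : Sol) : ℝ := subObj P 1 P.T s

/-- Feasibility for model `M(v)`: the two-stage case of model `M` in which
(C11) is replaced by `u i root = v i`. -/
def MvFeasible (P : ModelM) (v : ℕ → ℝ) (s : Sol) : Prop :=
  FeasOn P 1 2 (fun i _ => v i) s

/-- `s` is an optimal solution of the subproblem on stages `k,…,l` with
stage-`k` inventories `v`. -/
def SubOptimal (P : ModelM) (k l : ℕ) (v : ℕ → ℕ → ℝ) (s : Sol) : Prop :=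
  FeasOn P k l v s ∧ ∀ s', FeasOn P k l v s' → subObj P k l s' ≤ subObj P k l s

/-- The fixed stage-`k` inventories used at iteration `k` of the rolling
horizon approach: `E i B S i` for `k = 1`, and the values stored at iteration
`k - 1` (the inventories of `s (k-1)` at the stage-`k` nodes) for `k ≥ 2`. -/
def rhInv (P : ModelM) (s : ℕ → Sol) (k : ℕ) : ℕ → ℕ → ℝ :=
  if k ≤ 1 then fun i _ => P.E i * P.B * P.S i else fun i n => (s (k - 1)).u i k n

/-- Last stage `k + min(W, T - k)` of the subproblem at iteration `k` of the
rolling horizon approach with window `W`. -/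
def rhWindowEnd (P : ModelM) (W k : ℕ) : ℕ := k + min W (P.T - k)

/-- An execution of the rolling horizon approach with window `W`: for every
iteration `k = 1,…,T-1`, `s k` is an optimal solution of the subproblem on
stages `k,…,k + min(W, T-k)` with the stage-`k` inventories induced by the
previously stored solutions. -/
def IsExecution (P : ModelM) (W : ℕ) (s : ℕ → Sol) : Prop :=
  ∀ k, 1 ≤ k → k ≤ P.T - 1 →
    SubOptimal P k (rhWindowEnd P W k) (rhInv P s k) (s k)

/-- The rolling horizon value `z^{RH,W}`: the profit of model `M` evaluated at
the stored variables (`x`, `y` of stage `t` stored at iteration `t`; `w` at the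
stage-`t` nodes stored at iteration `t-1`). -/
def zRH (P : ModelM) (s : ℕ → Sol) : ℝ :=
  P.R * ∑ t ∈ Finset.Icc 2 P.T, ∑ n ∈ P.tree.N t,
      P.tree.prob t n * ∑ i ∈ P.Ibins, (s (t - 1)).w i t n
  - P.C * ∑ t ∈ Finset.Icc 1 (P.T - 1), ∑ i ∈ P.Iall,
      ∑ j ∈ P.Iall.erase i, P.d i j * (s t).x i j t

namespace RHAux

/-- Successor along the canonical tour `0 → 1 → ⋯ → Nb → 0`. -/
def nxt (Nb i : ℕ) : ℕ := if i = Nb then 0 else i + 1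

lemma nxt_le {Nb i : ℕ} (h : i ≤ Nb) : nxt Nb i ≤ Nb := by
  unfold nxt; split <;> omega

lemma nxt_ne {Nb i : ℕ} (hNb : 1 ≤ Nb) : nxt Nb i ≠ i := by
  unfold nxt; split <;> omega

lemma sum_out (Nb : ℕ) (hNb : 1 ≤ Nb) (i : ℕ) (hi : i ≤ Nb) (c : ℝ) :
    ∑ j ∈ (Finset.Icc 0 Nb).erase i, (if j = nxt Nb i then c else 0) = c := by
  rw [Finset.sum_ite_eq' ((Finset.Icc 0 Nb).erase i) (nxt Nb i) fun _ => c, if_pos]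
  exact Finset.mem_erase.2 ⟨nxt_ne hNb, Finset.mem_Icc.2 ⟨Nat.zero_le _, nxt_le hi⟩⟩

lemma sum_in_all (Nb : ℕ) (j : ℕ) (hj1 : 1 ≤ j) (hj2 : j ≤ Nb) (g : ℕ → ℝ) :
    ∑ i ∈ (Finset.Icc 0 Nb).erase j, (if j = nxt Nb i then g i else 0) = g (j - 1) := by
  rw [Finset.sum_eq_single (j - 1)]
  · rw [if_pos (show j = nxt Nb (j - 1) by unfold nxt; split <;> omega)]
  · intro b hb hbne
    have hb' : b ≠ j ∧ b ≤ Nb := by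
      simp only [Finset.mem_erase, Finset.mem_Icc] at hb; exact ⟨hb.1, hb.2.2⟩
    rw [if_neg (show ¬ j = nxt Nb b by unfold nxt; split <;> omega)]
  · intro h; exact absurd (Finset.mem_erase.2
      ⟨by omega, Finset.mem_Icc.2 ⟨Nat.zero_le _, by omega⟩⟩) h

lemma sum_in_bins (Nb : ℕ) (i : ℕ) (hi1 : 1 ≤ i) (hi2 : i ≤ Nb) (g : ℕ → ℝ) :
    ∑ j ∈ (Finset.Icc 1 Nb).erase i, (if i = nxt Nb j then g j else 0)
      = if 2 ≤ i then g (i - 1) else 0 := by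
  by_cases h2 : 2 ≤ i
  · rw [if_pos h2, Finset.sum_eq_single (i - 1)]
    · rw [if_pos (show i = nxt Nb (i - 1) by unfold nxt; split <;> omega)]
    · intro b hb hbne
      have hb' : b ≠ i ∧ 1 ≤ b ∧ b ≤ Nb := by
        simp only [Finset.mem_erase, Finset.mem_Icc] at hb; exact ⟨hb.1, hb.2⟩
      rw [if_neg (show ¬ i = nxt Nb b by unfold nxt; split <;> omega)]
    · intro h; exact absurd (Finset.mem_erase.2
        ⟨by omega, Finset.mem_Icc.2 ⟨by omega, by omega⟩⟩) h
  · rw [if_neg h2, Finset.sum_eq_zero]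
    intro b hb
    have hb' : b ≠ i ∧ 1 ≤ b ∧ b ≤ Nb := by
      simp only [Finset.mem_erase, Finset.mem_Icc] at hb; exact ⟨hb.1, hb.2⟩
    rw [if_neg (show ¬ i = nxt Nb b by unfold nxt; split <;> omega)]

lemma sum_dep_in (Nb : ℕ) (hNb : 1 ≤ Nb) (c : ℝ) :
    ∑ i ∈ Finset.Icc 1 Nb, (if (0 : ℕ) = nxt Nb i then c else 0) = c := by
  rw [Finset.sum_eq_single Nb]
  · rw [if_pos (show (0 : ℕ) = nxt Nb Nb by unfold nxt; simp)]
  · intro b hb hbne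
    have hb' : 1 ≤ b ∧ b ≤ Nb := Finset.mem_Icc.1 hb
    rw [if_neg (show ¬ (0 : ℕ) = nxt Nb b by unfold nxt; split <;> omega)]
  · intro h; exact absurd (Finset.mem_Icc.2 ⟨hNb, le_rfl⟩) h

lemma sum_dep_out (Nb : ℕ) (hNb : 1 ≤ Nb) (c : ℝ) :
    ∑ j ∈ Finset.Icc 1 Nb, (if j = nxt Nb 0 then c else 0) = c := by
  rw [Finset.sum_ite_eq' _ (nxt Nb 0) fun _ => c, if_pos]
  rw [show nxt Nb 0 = 1 by unfold nxt; split <;> omega]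
  exact Finset.mem_Icc.2 ⟨le_rfl, hNb⟩

lemma sum_EB_le_Q (P : ModelM) (hQ : P.B * ∑ i ∈ P.Ibins, P.E i ≤ P.Q)
    {m : ℕ} (hm : m ≤ P.Nb) : ∑ k ∈ Finset.Icc 1 m, P.E k * P.B ≤ P.Q := by
  have h2 : ∑ k ∈ Finset.Icc 1 m, P.E k * P.B ≤ ∑ k ∈ Finset.Icc 1 P.Nb, P.E k * P.B := by
    refine Finset.sum_le_sum_of_subset_of_nonneg (Finset.Icc_subset_Icc_right hm) ?_
    intro k hk _
    exact mul_nonneg (P.hE k hk) P.hB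
  have h3 : ∑ k ∈ Finset.Icc 1 P.Nb, P.E k * P.B = P.B * ∑ i ∈ P.Ibins, P.E i := by
    rw [Finset.mul_sum]; exact Finset.sum_congr rfl fun _ _ => mul_comm _ _
  linarith

lemma w_le_EB (P : ModelM) {i t n : ℕ} (hi : i ∈ Finset.Icc 1 P.Nb)
    (ht2 : 2 ≤ t) (htT : t ≤ P.T) (hn : n ∈ P.tree.N t) :
    P.E i * P.B * P.a i t n ≤ P.E i * P.B := by
  have h := P.ha i hi t ht2 htT n hn
  nlinarith [mul_nonneg (P.hE i hi) P.hB]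

lemma EB_le_Q (P : ModelM) (hQ : P.B * ∑ i ∈ P.Ibins, P.E i ≤ P.Q)
    {i : ℕ} (hi : i ∈ Finset.Icc 1 P.Nb) : P.E i * P.B ≤ P.Q := by
  have h1 : P.E i * P.B ≤ ∑ k ∈ Finset.Icc 1 P.Nb, P.E k * P.B :=
    Finset.single_le_sum (fun k hk => mul_nonneg (P.hE k hk) P.hB) hi
  have h2 := sum_EB_le_Q P hQ (le_refl P.Nb)
  linarith

lemma sum_a_le_Q (P : ModelM) (hQ : P.B * ∑ i ∈ P.Ibins, P.E i ≤ P.Q)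
    {t n m : ℕ} (ht2 : 2 ≤ t) (htT : t ≤ P.T) (hn : n ∈ P.tree.N t) (hm : m ≤ P.Nb) :
    ∑ k ∈ Finset.Icc 1 m, P.E k * P.B * P.a k t n ≤ P.Q := by
  refine le_trans (Finset.sum_le_sum fun k hk => ?_) (sum_EB_le_Q P hQ hm)
  have hk' : k ∈ Finset.Icc 1 P.Nb := by
    simp only [Finset.mem_Icc] at hk ⊢; omega
  exact w_le_EB P hk' ht2 htT hn

lemma sum_a_nonneg (P : ModelM) {t n m : ℕ} (ht2 : 2 ≤ t) (htT : t ≤ P.T)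
    (hn : n ∈ P.tree.N t) (hm : m ≤ P.Nb) :
    0 ≤ ∑ k ∈ Finset.Icc 1 m, P.E k * P.B * P.a k t n := by
  refine Finset.sum_nonneg fun k hk => ?_
  have hk' : k ∈ Finset.Icc 1 P.Nb := by simp only [Finset.mem_Icc] at hk ⊢; omega
  exact mul_nonneg (mul_nonneg (P.hE k hk') P.hB) (P.ha k hk' t ht2 htT n hn).1

/-- The explicit feasible solution: tour all bins at stages `T-2` and `T-1`,
collect everything that arrives, keep all inventories at `0`. -/
def feasSol (P : ModelM) : Sol where
  x i j t := if P.T - 2 ≤ t ∧ t ≤ P.T - 1 ∧ j = nxt P.Nb i then 1 else 0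
  y i t := if P.T - 2 ≤ t ∧ t ≤ P.T - 1 then 1 else 0
  f i j t n := if P.T - 1 ≤ t ∧ j = nxt P.Nb i then
      ∑ k ∈ Finset.Icc 1 i, P.E k * P.B * P.a k t n else 0
  w i t n := P.E i * P.B * P.a i t n
  u _ _ _ := 0

lemma feasSol_feasible (P : ModelM) (hT3 : 3 ≤ P.T)
    (hS0 : ∀ i ∈ P.Ibins, P.S i = 0)
    (hQ : P.B * ∑ i ∈ P.Ibins, P.E i ≤ P.Q) (hM : P.Q ≤ P.Mbig)
    (ha1 : ∀ i ∈ P.Ibins, ∀ t, 2 ≤ t → t ≤ P.T - 2 → ∀ n ∈ P.tree.N t, P.a i t n = 0) :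
    Feasible P (feasSol P) := by
  have hNb := P.hNb
  unfold Feasible FeasOn ModelM.Iall ModelM.Ibins
  unfold ModelM.Ibins at hS0 ha1
  refine ⟨?_, ?_, ?_, ?_, ?_, ?_, ?_, ?_, ?_, ?_, ?_, ?_, ?_, ?_, ?_, ?_, ?_, ?_⟩
  -- u at root
  · intro i hi n hn
    show (0 : ℝ) = P.E i * P.B * P.S i
    rw [hS0 i hi]; ring
  -- x binary
  · intro t _ _ i _ j _ _
    dsimp only [feasSol]
    split
    · exact Or.inr rfl
    · exact Or.inl rfl
  -- y binary
  · intro t _ _ i _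
    dsimp only [feasSol]
    split
    · exact Or.inr rfl
    · exact Or.inl rfl
  -- f nonneg
  · intro t ht2 htT n hn i hi j hj hij
    have hi' := Finset.mem_Icc.1 hi
    dsimp only [feasSol]
    split
    · exact sum_a_nonneg P ht2 htT hn hi'.2
    · exact le_rfl
  -- w nonneg
  · intro t ht2 htT n hn i hi
    exact mul_nonneg (mul_nonneg (P.hE i hi) P.hB) (P.ha i hi t ht2 htT n hn).1
  -- u nonneg
  · intro t _ _ n _ i _
    exact le_rfl
  -- C1
  · intro t ht2 htT n hn i hi
    obtain ⟨hi1, hi2⟩ := Finset.mem_Icc.1 hi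
    by_cases hc : P.T - 1 ≤ t
    · have hout : ∑ j ∈ (Finset.Icc 0 P.Nb).erase i, (feasSol P).f i j t n
          = ∑ k ∈ Finset.Icc 1 i, P.E k * P.B * P.a k t n := by
        have hterm : ∀ j, (feasSol P).f i j t n
            = if j = nxt P.Nb i then (∑ k ∈ Finset.Icc 1 i, P.E k * P.B * P.a k t n) else 0 := by
          intro j; dsimp only [feasSol]
          by_cases hj : j = nxt P.Nb i <;> simp [hj, hc]
        rw [Finset.sum_congr rfl fun j _ => hterm j]
        exact sum_out P.Nb hNb i hi2 _
      have hin : ∑ j ∈ (Finset.Icc 1 P.Nb).erase i, (feasSol P).f j i t n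
          = if 2 ≤ i then (∑ k ∈ Finset.Icc 1 (i - 1), P.E k * P.B * P.a k t n) else 0 := by
        have hterm : ∀ j, (feasSol P).f j i t n
            = if i = nxt P.Nb j then (∑ k ∈ Finset.Icc 1 j, P.E k * P.B * P.a k t n) else 0 := by
          intro j; dsimp only [feasSol]
          by_cases hj : i = nxt P.Nb j <;> simp [hj, hc]
        rw [Finset.sum_congr rfl fun j _ => hterm j]
        exact sum_in_bins P.Nb i hi1 hi2 _
      rw [hout, hin]
      show _ = P.E i * P.B * P.a i t n
      obtain ⟨m, rfl⟩ : ∃ m, i = m + 1 := ⟨i - 1, by omega⟩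
      by_cases h2 : 2 ≤ m + 1
      · rw [if_pos h2, show m + 1 - 1 = m from rfl,
          Finset.sum_Icc_succ_top (by omega : 1 ≤ m + 1)]
        ring
      · have hm0 : m = 0 := by omega
        subst hm0
        rw [if_neg h2, Finset.Icc_self, Finset.sum_singleton]
        ring
    · have hf0 : ∀ a b, (feasSol P).f a b t n = 0 := by
        intro a b; dsimp only [feasSol]
        rw [if_neg]; intro h; exact hc h.1
      have hw0 : P.a i t n = 0 := ha1 i hi t ht2 (by omega) n hn
      show (∑ j ∈ (Finset.Icc 0 P.Nb).erase i, (feasSol P).f i j t n)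
          - (∑ j ∈ (Finset.Icc 1 P.Nb).erase i, (feasSol P).f j i t n)
          = P.E i * P.B * P.a i t n
      simp [hf0, hw0]
  -- C2
  · intro t ht2 htT n hn i hi j hj hij
    obtain ⟨hi1, hi2⟩ := Finset.mem_Icc.1 hi
    obtain ⟨hj1, hj2⟩ := Finset.mem_Icc.1 hj
    by_cases hx : P.T - 2 ≤ t - 1 ∧ t - 1 ≤ P.T - 1 ∧ j = nxt P.Nb i
    · have hxx : (feasSol P).x i j (t - 1) = 1 := by
        dsimp only [feasSol]; rw [if_pos hx]
      have hc : P.T - 1 ≤ t := by omega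
      have hff : (feasSol P).f i j t n = ∑ k ∈ Finset.Icc 1 i, P.E k * P.B * P.a k t n := by
        dsimp only [feasSol]; rw [if_pos ⟨hc, hx.2.2⟩]
      rw [hxx, hff, mul_one]
      have hji : j = i + 1 := by
        have h := hx.2.2; unfold nxt at h; split at h <;> omega
      subst hji
      have hsum := Finset.sum_Icc_succ_top (by omega : 1 ≤ i + 1)
        (fun k => P.E k * P.B * P.a k t n)
      have hle := sum_a_le_Q P hQ ht2 htT hn hj2
      linarith
    · have hxx : (feasSol P).x i j (t - 1) = 0 := by
        dsimp only [feasSol]; rw [if_neg hx]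
      have hff : (feasSol P).f i j t n = 0 := by
        dsimp only [feasSol]; rw [if_neg]
        rintro ⟨h1, h2⟩; exact hx ⟨by omega, by omega, h2⟩
      rw [hxx, hff, mul_zero]
  -- C3
  · intro t ht2 htT n hn i hi
    obtain ⟨hi1, hi2⟩ := Finset.mem_Icc.1 hi
    by_cases hc : P.T - 1 ≤ t ∧ (0 : ℕ) = nxt P.Nb i
    · have hxx : (feasSol P).x i 0 (t - 1) = 1 := by
        dsimp only [feasSol]; rw [if_pos ⟨by omega, by omega, hc.2⟩]
      have hff : (feasSol P).f i 0 t n = ∑ k ∈ Finset.Icc 1 i, P.E k * P.B * P.a k t n := by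
        dsimp only [feasSol]; rw [if_pos hc]
      rw [hxx, hff, mul_one]
      exact sum_a_le_Q P hQ ht2 htT hn hi2
    · have hff : (feasSol P).f i 0 t n = 0 := by
        dsimp only [feasSol]; rw [if_neg hc]
      rw [hff]
      have hx : (0 : ℝ) ≤ (feasSol P).x i 0 (t - 1) := by
        dsimp only [feasSol]; split <;> norm_num
      exact mul_nonneg P.hQ hx
  -- C4
  · intro t ht2 htT n hn i hi j hj hij
    obtain ⟨hi1, hi2⟩ := Finset.mem_Icc.1 hi
    obtain ⟨hj1, hj2⟩ := Finset.mem_Icc.1 hj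
    show (feasSol P).f i j t n ≤ P.Q - P.E j * P.B * P.a j t n
    by_cases hc : P.T - 1 ≤ t ∧ j = nxt P.Nb i
    · have hff : (feasSol P).f i j t n = ∑ k ∈ Finset.Icc 1 i, P.E k * P.B * P.a k t n := by
        dsimp only [feasSol]; rw [if_pos hc]
      rw [hff]
      have hji : j = i + 1 := by
        have h := hc.2; unfold nxt at h; split at h <;> omega
      subst hji
      have hsum := Finset.sum_Icc_succ_top (by omega : 1 ≤ i + 1)
        (fun k => P.E k * P.B * P.a k t n)
      have hle := sum_a_le_Q P hQ ht2 htT hn hj2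
      linarith
    · have hff : (feasSol P).f i j t n = 0 := by
        dsimp only [feasSol]; rw [if_neg hc]
      rw [hff]
      have h1 := w_le_EB P hj ht2 htT hn
      have h2 := EB_le_Q P hQ hj
      linarith
  -- C5
  · intro t ht2 htT n hn i hi j hj hij
    obtain ⟨hi1, hi2⟩ := Finset.mem_Icc.1 hi
    show (feasSol P).w i t n - P.Mbig * (1 - (feasSol P).x i j (t - 1)) ≤ (feasSol P).f i j t n
    by_cases hx : P.T - 2 ≤ t - 1 ∧ t - 1 ≤ P.T - 1 ∧ j = nxt P.Nb i
    · have hxx : (feasSol P).x i j (t - 1) = 1 := by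
        dsimp only [feasSol]; rw [if_pos hx]
      have hc : P.T - 1 ≤ t := by omega
      have hff : (feasSol P).f i j t n = ∑ k ∈ Finset.Icc 1 i, P.E k * P.B * P.a k t n := by
        dsimp only [feasSol]; rw [if_pos ⟨hc, hx.2.2⟩]
      rw [hxx, hff]
      have hwle : P.E i * P.B * P.a i t n ≤ ∑ k ∈ Finset.Icc 1 i, P.E k * P.B * P.a k t n := by
        refine Finset.single_le_sum (f := fun k => P.E k * P.B * P.a k t n)
          (fun k hk => ?_) (Finset.mem_Icc.2 ⟨hi1, le_rfl⟩)
        have hk' : k ∈ Finset.Icc 1 P.Nb := by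
          simp only [Finset.mem_Icc] at hk ⊢; omega
        exact mul_nonneg (mul_nonneg (P.hE k hk') P.hB) (P.ha k hk' t ht2 htT n hn).1
      show P.E i * P.B * P.a i t n - P.Mbig * (1 - 1) ≤ _
      linarith
    · have hxx : (feasSol P).x i j (t - 1) = 0 := by
        dsimp only [feasSol]; rw [if_neg hx]
      have hff : (0 : ℝ) ≤ (feasSol P).f i j t n := by
        dsimp only [feasSol]; split
        · exact sum_a_nonneg P ht2 htT hn hi2
        · exact le_rfl
      rw [hxx]
      have h1 := w_le_EB P hi ht2 htT hn
      have h2 := EB_le_Q P hQ hi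
      show P.E i * P.B * P.a i t n - P.Mbig * (1 - 0) ≤ _
      linarith
  -- C6
  · intro t ht1 ht2 i hi
    obtain ⟨hi1, hi2⟩ := Finset.mem_Icc.1 hi
    by_cases hw : P.T - 2 ≤ t ∧ t ≤ P.T - 1
    · have hterm : ∀ j, (feasSol P).x i j t = if j = nxt P.Nb i then (1 : ℝ) else 0 := by
        intro j; dsimp only [feasSol]
        by_cases hj : j = nxt P.Nb i <;> simp [hj, hw.1, hw.2]
      rw [Finset.sum_congr rfl fun j _ => hterm j, sum_out P.Nb hNb i hi2 1]
      dsimp only [feasSol]; rw [if_pos hw]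
    · have hterm : ∀ j, (feasSol P).x i j t = 0 := by
        intro j; dsimp only [feasSol]
        rw [if_neg]; rintro ⟨h1, h2, _⟩; exact hw ⟨h1, h2⟩
      rw [Finset.sum_congr rfl fun j _ => hterm j, Finset.sum_const_zero]
      dsimp only [feasSol]; rw [if_neg hw]
  -- C7
  · intro t ht1 ht2 j hj
    obtain ⟨hj1, hj2⟩ := Finset.mem_Icc.1 hj
    by_cases hw : P.T - 2 ≤ t ∧ t ≤ P.T - 1
    · have hterm : ∀ i, (feasSol P).x i j t = if j = nxt P.Nb i then (1 : ℝ) else 0 := by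
        intro i; dsimp only [feasSol]
        by_cases hij : j = nxt P.Nb i <;> simp [hij, hw.1, hw.2]
      rw [Finset.sum_congr rfl fun i _ => hterm i, sum_in_all P.Nb j hj1 hj2 (fun _ => (1 : ℝ))]
      dsimp only [feasSol]; rw [if_pos hw]
    · have hterm : ∀ i, (feasSol P).x i j t = 0 := by
        intro i; dsimp only [feasSol]
        rw [if_neg]; rintro ⟨h1, h2, _⟩; exact hw ⟨h1, h2⟩
      rw [Finset.sum_congr rfl fun i _ => hterm i, Finset.sum_const_zero]
      dsimp only [feasSol]; rw [if_neg hw]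
  -- C8
  · intro t ht1 ht2
    by_cases hw : P.T - 2 ≤ t ∧ t ≤ P.T - 1
    · have hterm1 : ∀ i, (feasSol P).x i 0 t = if (0 : ℕ) = nxt P.Nb i then (1 : ℝ) else 0 := by
        intro i; dsimp only [feasSol]
        by_cases hij : (0 : ℕ) = nxt P.Nb i <;> simp [hij, hw.1, hw.2]
      have hterm2 : ∀ j, (feasSol P).x 0 j t = if j = nxt P.Nb 0 then (1 : ℝ) else 0 := by
        intro j; dsimp only [feasSol]
        by_cases hij : j = nxt P.Nb 0 <;> simp [hij, hw.1, hw.2]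
      rw [Finset.sum_congr rfl fun i _ => hterm1 i, Finset.sum_congr rfl fun j _ => hterm2 j,
        sum_dep_in P.Nb hNb 1, sum_dep_out P.Nb hNb 1]
    · have hterm : ∀ i j, (feasSol P).x i j t = 0 := by
        intro i j; dsimp only [feasSol]
        rw [if_neg]; rintro ⟨h1, h2, _⟩; exact hw ⟨h1, h2⟩
      rw [Finset.sum_congr rfl fun i _ => hterm i 0, Finset.sum_congr rfl fun j _ => hterm 0 j]
  -- C9
  · intro t ht2 htT n hn i hi
    show P.E i * P.B * P.a i t n ≤ P.E i * P.B * (feasSol P).y i (t - 1)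
    dsimp only [feasSol]
    by_cases hw : P.T - 2 ≤ t - 1 ∧ t - 1 ≤ P.T - 1
    · rw [if_pos hw, mul_one]
      exact w_le_EB P hi ht2 htT hn
    · rw [if_neg hw, mul_zero]
      rw [ha1 i hi t ht2 (by omega) n hn, mul_zero]
  -- C10
  · intro t ht2 htT n hn i hi
    show (0 : ℝ) ≤ P.Mbig * (1 - (feasSol P).y i (t - 1))
    refine mul_nonneg P.hMbig ?_
    dsimp only [feasSol]; split <;> norm_num
  -- C12
  · intro t ht2 htT n hn i hi
    show (0 : ℝ) = 0 + P.E i * P.B * P.a i t n - P.E i * P.B * P.a i t n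
    ring
  -- C13
  · intro t ht2 htT n hn i hi
    show (0 : ℝ) ≤ (1 - P.a i t n) * (P.E i * P.B)
    have h := P.ha i hi t ht2 htT n hn
    exact mul_nonneg (by linarith [h.2]) (mul_nonneg (P.hE i hi) P.hB)

/-- The do-nothing solution of the two-stage subproblem at iteration `k`. -/
def zeroSol (P : ModelM) (k : ℕ) (v : ℕ → ℕ → ℝ) : Sol where
  x _ _ _ := 0
  y _ _ := 0
  f _ _ _ _ := 0
  w _ _ _ := 0
  u i t n := if t = k then v i n else P.E i * P.B * P.a i (k + 1) n

lemma zeroSol_feasOn (P : ModelM) (hQ : P.B * ∑ i ∈ P.Ibins, P.E i ≤ P.Q)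
    (hM : P.Q ≤ P.Mbig) (k : ℕ) (hk1 : 1 ≤ k) (hk2 : k + 1 ≤ P.T)
    (v : ℕ → ℕ → ℝ) (hv : ∀ i ∈ P.Ibins, ∀ n ∈ P.tree.N k, v i n = 0) :
    FeasOn P k (k + 1) v (zeroSol P k v) := by
  unfold FeasOn ModelM.Iall ModelM.Ibins
  unfold ModelM.Ibins at hv
  refine ⟨?_, ?_, ?_, ?_, ?_, ?_, ?_, ?_, ?_, ?_, ?_, ?_, ?_, ?_, ?_, ?_, ?_, ?_⟩
  · intro i hi n hn
    show (if k = k then v i n else _) = v i n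
    rw [if_pos rfl]
  · intro t _ _ i _ j _ _; exact Or.inl rfl
  · intro t _ _ i _; exact Or.inl rfl
  · intro t _ _ n _ i _ j _ _; exact le_rfl
  · intro t _ _ n _ i _; exact le_rfl
  · intro t hta htb n hn i hi
    dsimp only [zeroSol]
    split
    · rename_i ht; subst ht
      rw [hv i hi n hn]
    · rename_i ht
      have ht' : t = k + 1 := by omega
      subst ht'
      exact mul_nonneg (mul_nonneg (P.hE i hi) P.hB)
        (P.ha i hi (k + 1) (by omega) hk2 n hn).1
  · intro t _ _ n _ i _; simp [zeroSol]
  · intro t _ _ n _ i _ j _ _; simp [zeroSol]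
  · intro t _ _ n _ i _; simp [zeroSol]
  · intro t _ _ n _ i _ j _ _; simp [zeroSol, P.hQ]
  · intro t _ _ n _ i _ j _ _
    show (0 : ℝ) - P.Mbig * (1 - 0) ≤ 0
    linarith [P.hMbig]
  · intro t _ _ i _; simp [zeroSol]
  · intro t _ _ j _; simp [zeroSol]
  · intro t _ _; simp [zeroSol]
  · intro t _ _ n _ i _; simp [zeroSol]
  · intro t hta htb n hn i hi
    have ht : t = k + 1 := by omega
    subst ht
    show (if k + 1 = k then v i n else P.E i * P.B * P.a i (k + 1) n)
        ≤ P.Mbig * (1 - 0)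
    rw [if_neg (by omega)]
    have h1 := w_le_EB P hi (by omega) hk2 hn
    have h2 := EB_le_Q P hQ hi
    linarith
  · intro t hta htb n hn i hi
    have ht : t = k + 1 := by omega
    subst ht
    have hpa : P.tree.pa (k + 1) n ∈ P.tree.N k :=
      P.tree.hpa (k + 1) (by omega) hk2 n hn
    show (if k + 1 = k then v i n else P.E i * P.B * P.a i (k + 1) n)
        = (if k + 1 - 1 = k then v i (P.tree.pa (k + 1) n) else _)
          + P.E i * P.B * P.a i (k + 1) n - 0
    rw [if_neg (by omega), if_pos (by omega), hv i hi _ hpa]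
    ring
  · intro t hta htb n hn i hi
    have ht : t = k + 1 := by omega
    subst ht
    have hpa : P.tree.pa (k + 1) n ∈ P.tree.N k :=
      P.tree.hpa (k + 1) (by omega) hk2 n hn
    show (if k + 1 - 1 = k then v i (P.tree.pa (k + 1) n) else _)
        ≤ (1 - P.a i (k + 1) n) * (P.E i * P.B)
    rw [if_pos (by omega), hv i hi _ hpa]
    have h := P.ha i hi (k + 1) (by omega) hk2 n hn
    exact mul_nonneg (by linarith [h.2]) (mul_nonneg (P.hE i hi) P.hB)

lemma zeroSol_obj (P : ModelM) (k : ℕ) (v : ℕ → ℕ → ℝ) :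
    subObj P k (k + 1) (zeroSol P k v) = 0 := by
  simp [subObj, zeroSol]

lemma opt_forces (P : ModelM) (hR0 : P.R = 0) (hCpos : 0 < P.C)
    (hdpos : ∀ i ∈ P.Iall, ∀ j ∈ P.Iall, i ≠ j → 0 < P.d i j)
    (hQ : P.B * ∑ i ∈ P.Ibins, P.E i ≤ P.Q) (hM : P.Q ≤ P.Mbig)
    (k : ℕ) (hk1 : 1 ≤ k) (hk2 : k + 1 ≤ P.T)
    (v : ℕ → ℕ → ℝ) (hv : ∀ i ∈ P.Ibins, ∀ n ∈ P.tree.N k, v i n = 0)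
    (sk : Sol) (hopt : SubOptimal P k (k + 1) v sk) :
    ∀ i ∈ P.Ibins, ∀ n ∈ P.tree.N (k + 1),
      sk.u i (k + 1) n = P.E i * P.B * P.a i (k + 1) n := by
  obtain ⟨hfeas, hbest⟩ := hopt
  have h0 : (0 : ℝ) ≤ subObj P k (k + 1) sk := by
    have h := hbest (zeroSol P k v) (zeroSol_feasOn P hQ hM k hk1 hk2 v hv)
    rwa [zeroSol_obj] at h
  obtain ⟨hu, hxb, hyb, hfnn, hwnn, hunn, hC1, hC2, hC3, hC4, hC5,
    hC6, hC7, hC8, hC9, hC10, hC12, hC13⟩ := hfeas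
  have hxnn : ∀ i ∈ P.Iall, ∀ j ∈ P.Iall.erase i, 0 ≤ P.d i j * sk.x i j k := by
    intro i hi j hj
    obtain ⟨hji, hj'⟩ := Finset.mem_erase.1 hj
    have hd := le_of_lt (hdpos i hi j hj' (Ne.symm hji))
    rcases hxb k le_rfl le_rfl i hi j hj' (Ne.symm hji) with h | h <;> rw [h]
    · simp
    · simpa using hd
  have hobj : subObj P k (k + 1) sk
      = -(P.C * ∑ i ∈ P.Iall, ∑ j ∈ P.Iall.erase i, P.d i j * sk.x i j k) := by
    unfold subObj
    rw [hR0]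
    simp only [Nat.add_sub_cancel, Finset.Icc_self, Finset.sum_singleton]
    ring
  have hnn : (0 : ℝ) ≤ ∑ i ∈ P.Iall, ∑ j ∈ P.Iall.erase i, P.d i j * sk.x i j k :=
    Finset.sum_nonneg fun i hi => Finset.sum_nonneg fun j hj => hxnn i hi j hj
  have hsum0 : ∑ i ∈ P.Iall, ∑ j ∈ P.Iall.erase i, P.d i j * sk.x i j k = 0 := by
    rw [hobj] at h0
    nlinarith
  have hx0 : ∀ i ∈ P.Iall, ∀ j ∈ P.Iall.erase i, sk.x i j k = 0 := by
    have h1 := (Finset.sum_eq_zero_iff_of_nonneg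
      (fun i hi => Finset.sum_nonneg fun j hj => hxnn i hi j hj)).1 hsum0
    intro i hi j hj
    have h2 := (Finset.sum_eq_zero_iff_of_nonneg (fun j hj => hxnn i hi j hj)).1
      (h1 i hi) j hj
    obtain ⟨hji, hj'⟩ := Finset.mem_erase.1 hj
    have hd := hdpos i hi j hj' (Ne.symm hji)
    exact (mul_eq_zero.1 h2).resolve_left (ne_of_gt hd)
  have hiall : ∀ {i : ℕ}, i ∈ P.Ibins → i ∈ P.Iall := by
    intro i hi
    simp only [ModelM.Ibins, ModelM.Iall, Finset.mem_Icc] at hi ⊢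
    omega
  have hy0 : ∀ i ∈ P.Ibins, sk.y i k = 0 := by
    intro i hi
    have h6 := hC6 k le_rfl le_rfl i hi
    rw [← h6]
    exact Finset.sum_eq_zero fun j hj => hx0 i (hiall hi) j hj
  intro i hi n hn
  have hw : sk.w i (k + 1) n = 0 := by
    have h9 := hC9 (k + 1) le_rfl le_rfl n hn i hi
    rw [show k + 1 - 1 = k from rfl, hy0 i hi, mul_zero] at h9
    exact le_antisymm h9 (hwnn (k + 1) le_rfl le_rfl n hn i hi)
  have hpa : P.tree.pa (k + 1) n ∈ P.tree.N k :=
    P.tree.hpa (k + 1) (by omega) hk2 n hn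
  have h12 := hC12 (k + 1) le_rfl le_rfl n hn i hi
  rw [show k + 1 - 1 = k from rfl] at h12
  rw [h12, hu i hi _ hpa, hv i hi _ hpa, hw]
  ring

lemma stored_u (P : ModelM) (hT3 : 3 ≤ P.T)
    (hS0 : ∀ i ∈ P.Ibins, P.S i = 0) (hR0 : P.R = 0) (hCpos : 0 < P.C)
    (hdpos : ∀ i ∈ P.Iall, ∀ j ∈ P.Iall, i ≠ j → 0 < P.d i j)
    (hQ : P.B * ∑ i ∈ P.Ibins, P.E i ≤ P.Q) (hM : P.Q ≤ P.Mbig)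
    (ha1 : ∀ i ∈ P.Ibins, ∀ t, 2 ≤ t → t ≤ P.T - 2 → ∀ n ∈ P.tree.N t, P.a i t n = 0)
    (s : ℕ → Sol)
    (hs : ∀ j, 1 ≤ j → j < P.T - 1 →
      SubOptimal P j (rhWindowEnd P 1 j) (rhInv P s j) (s j)) :
    ∀ k, 1 ≤ k → k ≤ P.T - 2 → ∀ i ∈ P.Ibins, ∀ n ∈ P.tree.N (k + 1),
      (s k).u i (k + 1) n = P.E i * P.B * P.a i (k + 1) n := by
  intro k
  induction k using Nat.strong_induction_on with
  | _ k IH =>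
    intro hk1 hk2 i hi n hn
    have hopt := hs k hk1 (by omega)
    have hwe : rhWindowEnd P 1 k = k + 1 := by
      unfold rhWindowEnd; omega
    rw [hwe] at hopt
    have hv : ∀ i' ∈ P.Ibins, ∀ m ∈ P.tree.N k, rhInv P s k i' m = 0 := by
      intro i' hi' m hm
      by_cases hk : k ≤ 1
      · have hrh : rhInv P s k i' m = P.E i' * P.B * P.S i' := by
          unfold rhInv; rw [if_pos hk]
        rw [hrh, hS0 i' hi', mul_zero]
      · have hrh : rhInv P s k i' m = (s (k - 1)).u i' k m := by
          unfold rhInv; rw [if_neg hk]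
        have hIH := IH (k - 1) (by omega) (by omega) (by omega) i' hi' m
          (by rw [show k - 1 + 1 = k from by omega]; exact hm)
        rw [show k - 1 + 1 = k from by omega] at hIH
        rw [hrh, hIH, ha1 i' hi' k (by omega) (by omega) m hm, mul_zero]
    exact opt_forces P hR0 hCpos hdpos hQ hM k hk1 (by omega)
      (rhInv P s k) hv (s k) hopt i hi n hn

end RHAux

/-- Theorem 2: on the instance class with `T ≥ 3`, `S ≡ 0`, `R = 0`, `C > 0`,
`B > 0`, `E_i > 0`, `d > 0`, `Q ≥ B Σ_{i∈I'} E_i`, `M ≥ Q`, positive node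
probabilities, and accumulation rates `0` on stages `2,…,T-2`, `α_i` on stage
`T-1` and `1 - α_i + ε_i` on stage `T` (with `α_i ∈ (0,1)`, `ε_i ∈ (0, α_i]`),
model `M` is feasible (so `z* > -∞`), while every execution of the rolling
horizon approach with window `W = 1` encounters an infeasible subproblem
(the final subproblem is infeasible along any partial execution and no
complete execution exists), so that `z^{RH,1} = -∞`. -/
theorem rolling_horizon_infeasible_instance (P : ModelM) (hT3 : 3 ≤ P.T)
    (hS0 : ∀ i ∈ P.Ibins, P.S i = 0) (hR0 : P.R = 0) (hCpos : 0 < P.C)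
    (hBpos : 0 < P.B) (hEpos : ∀ i ∈ P.Ibins, 0 < P.E i)
    (hdpos : ∀ i ∈ P.Iall, ∀ j ∈ P.Iall, i ≠ j → 0 < P.d i j)
    (hQ : P.B * ∑ i ∈ P.Ibins, P.E i ≤ P.Q) (hM : P.Q ≤ P.Mbig)
    (hpi : ∀ t, 1 ≤ t → t ≤ P.T → ∀ n ∈ P.tree.N t, 0 < P.tree.prob t n)
    (α ε : ℕ → ℝ)
    (hα : ∀ i ∈ P.Ibins, 0 < α i ∧ α i < 1)
    (hε : ∀ i ∈ P.Ibins, 0 < ε i ∧ ε i ≤ α i)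
    (ha1 : ∀ i ∈ P.Ibins, ∀ t, 2 ≤ t → t ≤ P.T - 2 → ∀ n ∈ P.tree.N t,
      P.a i t n = 0)
    (ha2 : ∀ i ∈ P.Ibins, ∀ n ∈ P.tree.N (P.T - 1), P.a i (P.T - 1) n = α i)
    (ha3 : ∀ i ∈ P.Ibins, ∀ n ∈ P.tree.N P.T, P.a i P.T n = 1 - α i + ε i) :
    (∃ s : Sol, Feasible P s) ∧
    (∀ s : ℕ → Sol,
        (∀ j, 1 ≤ j → j < P.T - 1 →
          SubOptimal P j (rhWindowEnd P 1 j) (rhInv P s j) (s j)) →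
        ¬ ∃ s' : Sol,
            FeasOn P (P.T - 1) (rhWindowEnd P 1 (P.T - 1))
              (rhInv P s (P.T - 1)) s') ∧
    (∀ s : ℕ → Sol, ¬ IsExecution P 1 s) := by
  have hIbins1 : (1 : ℕ) ∈ P.Ibins := by
    simp only [ModelM.Ibins, Finset.mem_Icc]
    exact ⟨le_rfl, P.hNb⟩
  have h2 : ∀ s : ℕ → Sol,
      (∀ j, 1 ≤ j → j < P.T - 1 →
        SubOptimal P j (rhWindowEnd P 1 j) (rhInv P s j) (s j)) →
      ¬ ∃ s' : Sol,
          FeasOn P (P.T - 1) (rhWindowEnd P 1 (P.T - 1)) (rhInv P s (P.T - 1)) s' := by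
    intro s hs
    rintro ⟨s', hs'⟩
    have hwe : rhWindowEnd P 1 (P.T - 1) = P.T := by
      unfold rhWindowEnd; omega
    rw [hwe] at hs'
    have hstored := RHAux.stored_u P hT3 hS0 hR0 hCpos hdpos hQ hM ha1 s hs
      (P.T - 2) (by omega) le_rfl
    have hT21 : P.T - 2 + 1 = P.T - 1 := by omega
    have hinv : ∀ i ∈ P.Ibins, ∀ m ∈ P.tree.N (P.T - 1),
        rhInv P s (P.T - 1) i m = P.E i * P.B * α i := by
      intro i hi m hm
      have hrh : rhInv P s (P.T - 1) i m = (s (P.T - 1 - 1)).u i (P.T - 1) m := by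
        unfold rhInv; rw [if_neg (by omega : ¬ P.T - 1 ≤ 1)]
      have hst := hstored i hi m (by rw [hT21]; exact hm)
      rw [hT21] at hst
      rw [hrh, show P.T - 1 - 1 = P.T - 2 from by omega, hst, ha2 i hi m hm]
    obtain ⟨hu, _, _, _, _, _, _, _, _, _, _, _, _, _, _, _, _, hC13⟩ := hs'
    obtain ⟨n, hn⟩ := P.tree.hne P.T (by omega) le_rfl
    have hpa : P.tree.pa P.T n ∈ P.tree.N (P.T - 1) :=
      P.tree.hpa P.T (by omega) le_rfl n hn
    have h13 := hC13 P.T (by omega) le_rfl n hn 1 hIbins1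
    have husub : s'.u 1 (P.T - 1) (P.tree.pa P.T n) = P.E 1 * P.B * α 1 := by
      rw [hu 1 hIbins1 _ hpa]
      exact hinv 1 hIbins1 _ hpa
    rw [husub, ha3 1 hIbins1 n hn] at h13
    have hE1 := hEpos 1 hIbins1
    have hα1 := hα 1 hIbins1
    have hε1 := hε 1 hIbins1
    nlinarith [mul_pos (mul_pos hE1 hBpos) hε1.1]
  refine ⟨⟨RHAux.feasSol P, RHAux.feasSol_feasible P hT3 hS0 hQ hM ha1⟩, h2, ?_⟩
  intro s hex
  exact h2 s (fun j hj1 hj2 => hex j hj1 (by omega))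
    ⟨s (P.T - 1), (hex (P.T - 1) (by omega) (by omega)).1⟩
end

section
/- (Feasibility of the Theorem 2 instance class.) Let T ≥ 3 and consider any instance of model M with S_i = 0 for all i ∈ I', R = 0, C > 0, B > 0, E_i > 0 for all i ∈ I', d_{ij} > 0 for all i, j ∈ I with i ≠ j, Q ≥ B Σ_{i∈I'} E_i, M ≥ Q, and accumulation rates given, for constants α_i ∈ (0,1) and ε_i ∈ (0, α_i] (i ∈ I'), by a_i^n = 0 for all n ∈ N^t with 2 ≤ t ≤ T−2, a_i^n = α_i for all n ∈ N^{T−1}, and a_i^n = 1 − α_i + ε_i for all n ∈ N^T. Then model M admits a feasible solution in which every bin is visited on day T−1: y_i^{T−2} = 1 for all i ∈ I', the arcs with x_{ij}^{T−2} = 1 form a single directed cycle through the depot and all bins, all other x and y variables equal 0, and the profit of this solution equals −C times the total distance of that cycle; in particular z* > −∞. -/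
/-! ### Auxiliary construction for `theorem2_instance_feasible` -/

/-- Cumulative load along the cycle after visiting bin `i`. -/
def t2F (P : ModelM) (α : ℕ → ℝ) (i : ℕ) : ℝ :=
  P.B * ∑ m ∈ Finset.Icc 1 i, P.E m * α m

def t2x (P : ModelM) (i j t : ℕ) : ℝ :=
  if t = P.T - 2 ∧ i ≤ P.Nb ∧ j = (i + 1) % (P.Nb + 1) then 1 else 0

def t2y (P : ModelM) (i t : ℕ) : ℝ :=
  if t = P.T - 2 then 1 else 0

def t2f (P : ModelM) (α : ℕ → ℝ) (i j t n : ℕ) : ℝ :=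
  if t = P.T - 1 ∧ 1 ≤ i ∧ i ≤ P.Nb ∧ j = (i + 1) % (P.Nb + 1) then t2F P α i else 0

def t2w (P : ModelM) (α : ℕ → ℝ) (i t n : ℕ) : ℝ :=
  if t = P.T - 1 then P.E i * P.B * α i else 0

def t2u (P : ModelM) (α ε : ℕ → ℝ) (i t n : ℕ) : ℝ :=
  if t = P.T then P.E i * P.B * (1 - α i + ε i) else 0

def t2sol (P : ModelM) (α ε : ℕ → ℝ) : Sol :=
  ⟨t2x P, t2y P, t2f P α, t2w P α, t2u P α ε⟩

lemma t2sol_x (P : ModelM) (α ε : ℕ → ℝ) : (t2sol P α ε).x = t2x P := rfl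
lemma t2sol_y (P : ModelM) (α ε : ℕ → ℝ) : (t2sol P α ε).y = t2y P := rfl
lemma t2sol_f (P : ModelM) (α ε : ℕ → ℝ) : (t2sol P α ε).f = t2f P α := rfl
lemma t2sol_w (P : ModelM) (α ε : ℕ → ℝ) : (t2sol P α ε).w = t2w P α := rfl
lemma t2sol_u (P : ModelM) (α ε : ℕ → ℝ) : (t2sol P α ε).u = t2u P α ε := rfl

lemma t2x_pos (P : ModelM) {i j t : ℕ} (h : t = P.T - 2) (h2 : i ≤ P.Nb)
    (h3 : j = (i + 1) % (P.Nb + 1)) : t2x P i j t = 1 := if_pos ⟨h, h2, h3⟩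

lemma t2x_zero (P : ModelM) {i j t : ℕ}
    (h : ¬(t = P.T - 2 ∧ i ≤ P.Nb ∧ j = (i + 1) % (P.Nb + 1))) : t2x P i j t = 0 := if_neg h

lemma t2f_eq_pos (P : ModelM) (α : ℕ → ℝ) {i j t : ℕ} (n : ℕ) (h : t = P.T - 1)
    (h1 : 1 ≤ i) (h2 : i ≤ P.Nb) (h3 : j = (i + 1) % (P.Nb + 1)) :
    t2f P α i j t n = t2F P α i := if_pos ⟨h, h1, h2, h3⟩

lemma t2f_eq_zero (P : ModelM) (α : ℕ → ℝ) {i j t : ℕ} (n : ℕ)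
    (h : ¬(t = P.T - 1 ∧ 1 ≤ i ∧ i ≤ P.Nb ∧ j = (i + 1) % (P.Nb + 1))) :
    t2f P α i j t n = 0 := if_neg h

/-- Feasibility of the Theorem 2 instance class: on the instance with `T ≥ 3`,
`S ≡ 0`, `R = 0`, `C > 0`, `B > 0`, `E_i > 0`, `d > 0`, `Q ≥ B Σ_{i∈I'} E_i`,
`M ≥ Q`, and accumulation rates `0` on stages `2,…,T-2`, `α_i` on stage `T-1`
and `1 - α_i + ε_i` on stage `T`, model `M` admits a feasible solution in
which every bin is visited on day `T-1` (`y_i^{T-2} = 1`), the arcs with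
`x_{ij}^{T-2} = 1` form a single directed cycle `c 0 → c 1 → ⋯ → c N → c 0`
through the depot and all bins, all other `x` and `y` variables vanish, and
the profit equals `-C` times the total distance of that cycle; in particular
`z* > -∞`. -/
theorem theorem2_instance_feasible (P : ModelM) (hT3 : 3 ≤ P.T)
    (hS0 : ∀ i ∈ P.Ibins, P.S i = 0) (hR0 : P.R = 0) (hCpos : 0 < P.C)
    (hBpos : 0 < P.B) (hEpos : ∀ i ∈ P.Ibins, 0 < P.E i)
    (hdpos : ∀ i ∈ P.Iall, ∀ j ∈ P.Iall, i ≠ j → 0 < P.d i j)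
    (hQ : P.B * ∑ i ∈ P.Ibins, P.E i ≤ P.Q) (hM : P.Q ≤ P.Mbig)
    (α ε : ℕ → ℝ)
    (hα : ∀ i ∈ P.Ibins, 0 < α i ∧ α i < 1)
    (hε : ∀ i ∈ P.Ibins, 0 < ε i ∧ ε i ≤ α i)
    (ha1 : ∀ i ∈ P.Ibins, ∀ t, 2 ≤ t → t ≤ P.T - 2 → ∀ n ∈ P.tree.N t,
      P.a i t n = 0)
    (ha2 : ∀ i ∈ P.Ibins, ∀ n ∈ P.tree.N (P.T - 1), P.a i (P.T - 1) n = α i)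
    (ha3 : ∀ i ∈ P.Ibins, ∀ n ∈ P.tree.N P.T, P.a i P.T n = 1 - α i + ε i) :
    ∃ (s : Sol) (c : ℕ → ℕ),
      Feasible P s ∧
      Set.InjOn c ↑(Finset.range (P.Nb + 1)) ∧
      (Finset.range (P.Nb + 1)).image c = P.Iall ∧
      (∀ i ∈ P.Ibins, s.y i (P.T - 2) = 1) ∧
      (∀ i ∈ P.Ibins, ∀ t, 1 ≤ t → t + 1 ≤ P.T → t ≠ P.T - 2 → s.y i t = 0) ∧
      (∀ i ∈ P.Iall, ∀ j ∈ P.Iall, i ≠ j → ∀ t, 1 ≤ t → t + 1 ≤ P.T →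
        t ≠ P.T - 2 → s.x i j t = 0) ∧
      (∀ i ∈ P.Iall, ∀ j ∈ P.Iall, i ≠ j →
        (s.x i j (P.T - 2) = 1 ↔
          ∃ k < P.Nb + 1, i = c k ∧ j = c ((k + 1) % (P.Nb + 1)))) ∧
      profit P s
        = -P.C * ∑ k ∈ Finset.range (P.Nb + 1),
            P.d (c k) (c ((k + 1) % (P.Nb + 1))) := by
  classical
  have hT := hT3
  have hNb := P.hNb
  have hIall : ∀ {i : ℕ}, i ∈ P.Iall ↔ i ≤ P.Nb := by
    intro i; simp [ModelM.Iall]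
  have hIbins : ∀ {i : ℕ}, i ∈ P.Ibins ↔ 1 ≤ i ∧ i ≤ P.Nb := by
    intro i; simp [ModelM.Ibins]
  have hmodNb : (P.Nb + 1) % (P.Nb + 1) = 0 := Nat.mod_self _
  have hmodlt : ∀ i, i < P.Nb → (i + 1) % (P.Nb + 1) = i + 1 :=
    fun i h => Nat.mod_eq_of_lt (by omega)
  have hmodle : ∀ i : ℕ, (i + 1) % (P.Nb + 1) ≤ P.Nb := by
    intro i
    have := Nat.mod_lt (i + 1) (show 0 < P.Nb + 1 by omega)
    omega
  have hmodcase : ∀ i, i ≤ P.Nb → (i + 1) % (P.Nb + 1) = if i = P.Nb then 0 else i + 1 := by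
    intro i hi
    rcases eq_or_lt_of_le hi with h | h
    · simp [h, hmodNb]
    · rw [if_neg (by omega), hmodlt i h]
  have hmodne : ∀ i, i ≤ P.Nb → (i + 1) % (P.Nb + 1) ≠ i := by
    intro i hi
    rw [hmodcase i hi]
    split_ifs with h <;> omega
  have hEα : ∀ m, 1 ≤ m → m ≤ P.Nb → 0 ≤ P.E m * α m ∧ P.E m * α m ≤ P.E m := by
    intro m h1 h2
    have hE := hEpos m (hIbins.mpr ⟨h1, h2⟩)
    have hα' := hα m (hIbins.mpr ⟨h1, h2⟩)
    constructor
    · exact mul_nonneg hE.le hα'.1.le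
    · nlinarith [hα'.2]
  have hFnn : ∀ i, i ≤ P.Nb → 0 ≤ t2F P α i := by
    intro i hi
    apply mul_nonneg P.hB
    apply Finset.sum_nonneg
    intro m hm
    rw [Finset.mem_Icc] at hm
    exact (hEα m hm.1 (le_trans hm.2 hi)).1
  have hFQ : ∀ i, i ≤ P.Nb → t2F P α i ≤ P.Q := by
    intro i hi
    have h1 : ∑ m ∈ Finset.Icc 1 i, P.E m * α m ≤ ∑ m ∈ Finset.Icc 1 i, P.E m := by
      apply Finset.sum_le_sum
      intro m hm; rw [Finset.mem_Icc] at hm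
      exact (hEα m hm.1 (le_trans hm.2 hi)).2
    have h2 : ∑ m ∈ Finset.Icc 1 i, P.E m ≤ ∑ m ∈ P.Ibins, P.E m := by
      apply Finset.sum_le_sum_of_subset_of_nonneg
      · intro m hm; rw [Finset.mem_Icc] at hm
        exact hIbins.mpr ⟨hm.1, le_trans hm.2 hi⟩
      · intro m hm _; exact (hEpos m hm).le
    have h3 : t2F P α i ≤ P.B * ∑ m ∈ P.Ibins, P.E m :=
      mul_le_mul_of_nonneg_left (le_trans h1 h2) P.hB
    linarith
  have hFsucc : ∀ i, 1 ≤ i → t2F P α i = t2F P α (i - 1) + P.B * (P.E i * α i) := by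
    intro i hi
    have hins : Finset.Icc 1 i = insert i (Finset.Icc 1 (i - 1)) := by
      ext m; simp only [Finset.mem_Icc, Finset.mem_insert]; omega
    unfold t2F
    rw [hins, Finset.sum_insert (by simp only [Finset.mem_Icc]; omega)]
    ring
  have hwF : ∀ i, 1 ≤ i → i ≤ P.Nb → P.E i * P.B * α i ≤ t2F P α i := by
    intro i h1 h2
    have hs := hFsucc i h1
    have hn := hFnn (i - 1) (by omega)
    nlinarith
  have hwQ : ∀ i, 1 ≤ i → i ≤ P.Nb → P.E i * P.B * α i ≤ P.Q :=
    fun i h1 h2 => le_trans (hwF i h1 h2) (hFQ i h2)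
  have hEBQ : ∀ i, 1 ≤ i → i ≤ P.Nb → P.E i * P.B ≤ P.Q := by
    intro i h1 h2
    have h3 : P.E i ≤ ∑ m ∈ P.Ibins, P.E m :=
      Finset.single_le_sum (fun m hm => (hEpos m hm).le) (hIbins.mpr ⟨h1, h2⟩)
    nlinarith [P.hB]
  have hwnn : ∀ i, 1 ≤ i → i ≤ P.Nb → 0 ≤ P.E i * P.B * α i := by
    intro i h1 h2
    have hE := hEpos i (hIbins.mpr ⟨h1, h2⟩)
    have hα' := (hα i (hIbins.mpr ⟨h1, h2⟩)).1
    positivity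
  have hchain : ∀ i, i + 1 ≤ P.Nb → t2F P α i + P.E (i + 1) * P.B * α (i + 1) ≤ P.Q := by
    intro i hi
    have h1 := hFsucc (i + 1) (by omega)
    have h2 := hFQ (i + 1) hi
    simp only [Nat.add_sub_cancel] at h1
    nlinarith
  have hfnn : ∀ i j t n, 0 ≤ t2f P α i j t n := by
    intro i j t n
    unfold t2f
    split_ifs with h
    · exact hFnn i h.2.2.1
    · exact le_rfl
  refine ⟨t2sol P α ε, id, ?_, fun a _ b _ h => h, ?_, ?_, ?_, ?_, ?_, ?_⟩
  · -- Feasibility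
    refine ⟨?_, ?_, ?_, ?_, ?_, ?_, ?_, ?_, ?_, ?_, ?_, ?_, ?_, ?_, ?_, ?_, ?_, ?_⟩
    · -- initial inventories
      intro i hi n _
      simp only [t2sol_u, t2u]
      rw [if_neg (show (1:ℕ) ≠ P.T by omega), hS0 i hi, mul_zero]
    · -- x binary
      intro t _ _ i _ j _ _
      simp only [t2sol_x, t2x]
      split_ifs <;> norm_num
    · -- y binary
      intro t _ _ i _
      simp only [t2sol_y, t2y]
      split_ifs <;> norm_num
    · -- f nonneg
      intro t _ _ n _ i _ j _ _
      simp only [t2sol_f]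
      exact hfnn i j t n
    · -- w nonneg
      intro t _ _ n _ i hi
      obtain ⟨hi1, hi2⟩ := hIbins.mp hi
      simp only [t2sol_w, t2w]
      split_ifs
      · exact hwnn i hi1 hi2
      · exact le_rfl
    · -- u nonneg
      intro t _ _ n _ i hi
      simp only [t2sol_u, t2u]
      split_ifs
      · exact mul_nonneg (mul_nonneg (hEpos i hi).le P.hB)
          (by linarith [(hα i hi).2, (hε i hi).1])
      · exact le_rfl
    · -- C1
      intro t h1 h2 n hn i hi
      obtain ⟨hi1, hi2⟩ := hIbins.mp hi
      simp only [t2sol_f, t2sol_w, t2w]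
      by_cases ht : t = P.T - 1
      · subst ht
        have hout : (∑ j ∈ P.Iall.erase i, t2f P α i j (P.T - 1) n) = t2F P α i := by
          rw [Finset.sum_eq_single_of_mem ((i + 1) % (P.Nb + 1))
            (Finset.mem_erase.mpr ⟨hmodne i hi2, hIall.mpr (hmodle i)⟩)
            (fun j _ hjne => t2f_eq_zero P α n (by rintro ⟨-, -, -, h⟩; exact hjne h)),
            t2f_eq_pos P α n rfl hi1 hi2 rfl]
        have hin : (∑ j ∈ P.Ibins.erase i, t2f P α j i (P.T - 1) n) = t2F P α (i - 1) := by
          by_cases hi2' : 2 ≤ i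
          · rw [Finset.sum_eq_single_of_mem (i - 1)
              (Finset.mem_erase.mpr ⟨by omega, hIbins.mpr ⟨by omega, by omega⟩⟩)
              (fun j hj hjne => t2f_eq_zero P α n (by
                obtain ⟨hj1, hj2⟩ := hIbins.mp (Finset.mem_erase.mp hj).2
                rintro ⟨-, -, -, h⟩
                rw [hmodcase j hj2] at h
                split_ifs at h with hNbj <;> omega)),
              t2f_eq_pos P α n rfl (by omega) (by omega)
                (by rw [show i - 1 + 1 = i from by omega, Nat.mod_eq_of_lt (by omega)])]
          · have h0 : t2F P α (i - 1) = 0 := by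
              have hi0 : i - 1 = 0 := by omega
              rw [hi0]; simp [t2F]
            rw [h0]
            apply Finset.sum_eq_zero
            intro j hj
            obtain ⟨hj1, hj2⟩ := hIbins.mp (Finset.mem_erase.mp hj).2
            apply t2f_eq_zero
            rintro ⟨-, -, -, h⟩
            rw [hmodcase j hj2] at h
            split_ifs at h with hNbj <;> omega
        rw [hout, hin, if_pos rfl, hFsucc i hi1]
        ring
      · have h1' : (∑ j ∈ P.Iall.erase i, t2f P α i j t n) = 0 :=
          Finset.sum_eq_zero fun j _ => t2f_eq_zero P α n (by rintro ⟨h, -⟩; exact ht h)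
        have h2' : (∑ j ∈ P.Ibins.erase i, t2f P α j i t n) = 0 :=
          Finset.sum_eq_zero fun j _ => t2f_eq_zero P α n (by rintro ⟨h, -⟩; exact ht h)
        rw [h1', h2', if_neg ht, sub_zero]
    · -- C2
      intro t h1 h2 n hn i hi j hj hij
      obtain ⟨hi1, hi2⟩ := hIbins.mp hi
      obtain ⟨hj1, hj2⟩ := hIbins.mp hj
      simp only [t2sol_f, t2sol_x]
      by_cases hc : t = P.T - 1 ∧ j = (i + 1) % (P.Nb + 1)
      · obtain ⟨ht, hjj⟩ := hc
        subst ht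
        have hji : j = i + 1 := by
          rw [hmodcase i hi2] at hjj
          split_ifs at hjj with h <;> omega
        rw [t2f_eq_pos P α n rfl hi1 hi2 hjj, t2x_pos P (by omega) hi2 hjj,
          ha2 j hj n hn, mul_one]
        subst hji
        linarith [hchain i (by omega)]
      · rw [t2f_eq_zero P α n (by rintro ⟨ht, -, -, hjj⟩; exact hc ⟨ht, hjj⟩),
          t2x_zero P (by rintro ⟨ht', -, hjj⟩; exact hc ⟨by omega, hjj⟩), mul_zero]
    · -- C3
      intro t h1 h2 n hn i hi
      obtain ⟨hi1, hi2⟩ := hIbins.mp hi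
      simp only [t2sol_f, t2sol_x]
      by_cases hc : t = P.T - 1 ∧ i = P.Nb
      · obtain ⟨ht, hiNb⟩ := hc
        subst ht; subst hiNb
        rw [t2f_eq_pos P α n rfl hi1 le_rfl hmodNb.symm,
          t2x_pos P (by omega) le_rfl hmodNb.symm, mul_one]
        exact hFQ _ le_rfl
      · have hf0 : t2f P α i 0 t n = 0 := by
          apply t2f_eq_zero
          rintro ⟨ht, -, hi2', hjj⟩
          by_cases hNbi : i = P.Nb
          · exact hc ⟨ht, hNbi⟩
          · rw [hmodcase i hi2', if_neg hNbi] at hjj; omega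
        have hx0 : t2x P i 0 (t - 1) = 0 := by
          apply t2x_zero
          rintro ⟨ht', hi2', hjj⟩
          by_cases hNbi : i = P.Nb
          · exact hc ⟨by omega, hNbi⟩
          · rw [hmodcase i hi2', if_neg hNbi] at hjj; omega
        rw [hf0, hx0, mul_zero]
    · -- C4
      intro t h1 h2 n hn i hi j hj hij
      obtain ⟨hi1, hi2⟩ := hIbins.mp hi
      obtain ⟨hj1, hj2⟩ := hIbins.mp hj
      simp only [t2sol_f, t2sol_w, t2w]
      by_cases hc : t = P.T - 1 ∧ j = (i + 1) % (P.Nb + 1)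
      · obtain ⟨ht, hjj⟩ := hc
        subst ht
        have hji : j = i + 1 := by
          rw [hmodcase i hi2] at hjj
          split_ifs at hjj with h <;> omega
        rw [t2f_eq_pos P α n rfl hi1 hi2 hjj, if_pos rfl]
        subst hji
        linarith [hchain i (by omega)]
      · rw [t2f_eq_zero P α n (by rintro ⟨ht, -, -, hjj⟩; exact hc ⟨ht, hjj⟩)]
        split_ifs with ht
        · linarith [hwQ j hj1 hj2]
        · linarith [P.hQ]
    · -- C5
      intro t h1 h2 n hn i hi j hj hij
      obtain ⟨hi1, hi2⟩ := hIbins.mp hi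
      simp only [t2sol_x, t2sol_w, t2sol_f, t2w]
      by_cases hc : t - 1 = P.T - 2 ∧ i ≤ P.Nb ∧ j = (i + 1) % (P.Nb + 1)
      · have ht : t = P.T - 1 := by omega
        rw [t2x_pos P hc.1 hc.2.1 hc.2.2, t2f_eq_pos P α n ht hi1 hi2 hc.2.2, if_pos ht]
        have := hwF i hi1 hi2
        linarith
      · rw [t2x_zero P hc]
        have hf := hfnn i j t n
        have hw : (if t = P.T - 1 then P.E i * P.B * α i else 0) ≤ P.Mbig := by
          split_ifs
          · linarith [hwQ i hi1 hi2, hM]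
          · linarith [P.hMbig]
        linarith
    · -- C6
      intro t h1 h2 i hi
      obtain ⟨hi1, hi2⟩ := hIbins.mp hi
      simp only [t2sol_x, t2sol_y, t2y]
      by_cases ht : t = P.T - 2
      · rw [Finset.sum_eq_single_of_mem ((i + 1) % (P.Nb + 1))
          (Finset.mem_erase.mpr ⟨hmodne i hi2, hIall.mpr (hmodle i)⟩)
          (fun j _ hjne => t2x_zero P (by rintro ⟨-, -, h⟩; exact hjne h)),
          t2x_pos P ht hi2 rfl, if_pos ht]
      · rw [Finset.sum_eq_zero (fun j _ => t2x_zero P (by rintro ⟨h, -⟩; exact ht h)),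
          if_neg ht]
    · -- C7
      intro t h1 h2 j hj
      obtain ⟨hj1, hj2⟩ := hIbins.mp hj
      simp only [t2sol_x, t2sol_y, t2y]
      by_cases ht : t = P.T - 2
      · rw [Finset.sum_eq_single_of_mem (j - 1)
          (Finset.mem_erase.mpr ⟨by omega, hIall.mpr (by omega)⟩)
          (fun i hi hine => t2x_zero P (by
            have hi2 : i ≤ P.Nb := hIall.mp (Finset.mem_erase.mp hi).2
            rintro ⟨-, -, h⟩
            rw [hmodcase i hi2] at h
            split_ifs at h with hNbi <;> omega)),
          t2x_pos P ht (by omega)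
            (by rw [show j - 1 + 1 = j from by omega, Nat.mod_eq_of_lt (by omega)]),
          if_pos ht]
      · rw [Finset.sum_eq_zero (fun i _ => t2x_zero P (by rintro ⟨h, -⟩; exact ht h)),
          if_neg ht]
    · -- C8
      intro t h1 h2
      simp only [t2sol_x]
      by_cases ht : t = P.T - 2
      · rw [Finset.sum_eq_single_of_mem P.Nb (hIbins.mpr ⟨hNb, le_rfl⟩)
          (fun i hi hine => t2x_zero P (by
            obtain ⟨hi1, hi2⟩ := hIbins.mp hi
            rintro ⟨-, -, h⟩
            rw [hmodcase i hi2] at h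
            split_ifs at h with hNbi <;> omega)),
          Finset.sum_eq_single_of_mem 1 (hIbins.mpr ⟨le_rfl, hNb⟩)
          (fun j hj hjne => t2x_zero P (by
            rintro ⟨-, -, h⟩
            rw [hmodcase 0 (by omega), if_neg (show (0:ℕ) ≠ P.Nb by omega)] at h
            exact hjne h)),
          t2x_pos P ht le_rfl hmodNb.symm,
          t2x_pos P ht (by omega)
            (by rw [hmodcase 0 (by omega), if_neg (show (0:ℕ) ≠ P.Nb by omega)])]
      · rw [Finset.sum_eq_zero (fun i _ => t2x_zero P (by rintro ⟨h, -⟩; exact ht h)),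
          Finset.sum_eq_zero (fun j _ => t2x_zero P (by rintro ⟨h, -⟩; exact ht h))]
    · -- C9
      intro t h1 h2 n hn i hi
      obtain ⟨hi1, hi2⟩ := hIbins.mp hi
      simp only [t2sol_w, t2sol_y, t2w, t2y]
      by_cases ht : t = P.T - 1
      · rw [if_pos ht, if_pos (show t - 1 = P.T - 2 by omega)]
        have hE := (hEpos i hi).le
        have hα' := (hα i hi).2
        have h3 : 0 ≤ P.E i * P.B * (1 - α i) :=
          mul_nonneg (mul_nonneg hE P.hB) (by linarith)
        nlinarith
      · rw [if_neg ht, if_neg (show ¬(t - 1 = P.T - 2) by omega), mul_zero]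
    · -- C10
      intro t h1 h2 n hn i hi
      obtain ⟨hi1, hi2⟩ := hIbins.mp hi
      simp only [t2sol_u, t2sol_y, t2u, t2y]
      by_cases ht : t = P.T
      · rw [if_pos ht, if_neg (show ¬(t - 1 = P.T - 2) by omega)]
        obtain ⟨hα1, hα2⟩ := hα i hi
        obtain ⟨hε1, hε2⟩ := hε i hi
        have hEB : 0 ≤ P.E i * P.B := mul_nonneg (hEpos i hi).le P.hB
        have h4 : P.E i * P.B * (1 - α i + ε i) ≤ P.E i * P.B * 1 :=
          mul_le_mul_of_nonneg_left (by linarith) hEB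
        have h5 := hEBQ i hi1 hi2
        nlinarith
      · rw [if_neg ht]
        by_cases ht' : t - 1 = P.T - 2
        · rw [if_pos ht']
          nlinarith [P.hMbig]
        · rw [if_neg ht']
          nlinarith [P.hMbig]
    · -- C12
      intro t h1 h2 n hn i hi
      simp only [t2sol_u, t2sol_w, t2u, t2w]
      by_cases ht : t = P.T
      · subst ht
        rw [if_pos rfl, if_neg (show P.T - 1 ≠ P.T by omega),
          if_neg (show P.T ≠ P.T - 1 by omega), ha3 i hi n hn]
        ring
      · by_cases ht' : t = P.T - 1
        · subst ht'
          rw [if_neg (show P.T - 1 ≠ P.T by omega),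
            if_neg (show P.T - 1 - 1 ≠ P.T by omega), if_pos rfl, ha2 i hi n hn]
          ring
        · rw [if_neg ht, if_neg (show t - 1 ≠ P.T by omega), if_neg ht',
            ha1 i hi t (by omega) (by omega) n hn]
          ring
    · -- C13
      intro t h1 h2 n hn i hi
      simp only [t2sol_u, t2u]
      rw [if_neg (show t - 1 ≠ P.T by omega)]
      have ha' := P.ha i hi t (by omega) h2 n hn
      have hEB : 0 ≤ P.E i * P.B := mul_nonneg (hEpos i hi).le P.hB
      have h4 : 0 ≤ (1 - P.a i t n) * (P.E i * P.B) :=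
        mul_nonneg (by linarith [ha'.2]) hEB
      linarith
  · -- image = Iall
    rw [Finset.image_id]
    ext k
    simp [ModelM.Iall, Nat.lt_succ_iff]
  · -- y at T-2
    intro i hi
    simp [t2sol_y, t2y]
  · -- other y zero
    intro i hi t ht1 ht2 htne
    simp only [t2sol_y, t2y]
    exact if_neg htne
  · -- other x zero
    intro i hi j hj hij t ht1 ht2 htne
    simp only [t2sol_x]
    exact t2x_zero P (by rintro ⟨h, -⟩; exact htne h)
  · -- the cycle characterization
    intro i hi j hj hij
    simp only [t2sol_x, id_eq]
    constructor
    · intro h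
      by_cases hc : i ≤ P.Nb ∧ j = (i + 1) % (P.Nb + 1)
      · exact ⟨i, Nat.lt_succ_of_le hc.1, rfl, hc.2⟩
      · rw [t2x_zero P (by rintro ⟨-, h1', h2'⟩; exact hc ⟨h1', h2'⟩)] at h
        norm_num at h
    · rintro ⟨k, hk, rfl, rfl⟩
      exact t2x_pos P rfl (by omega) rfl
  · -- profit
    have hIallr : P.Iall = Finset.range (P.Nb + 1) := by
      ext k; simp [ModelM.Iall, Nat.lt_succ_iff]
    have hzero : ∀ t ∈ Finset.Icc 1 (P.T - 1), t ≠ P.T - 2 →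
        (∑ i ∈ P.Iall, ∑ j ∈ P.Iall.erase i, P.d i j * t2x P i j t) = 0 := by
      intro t ht htne
      apply Finset.sum_eq_zero; intro i _
      apply Finset.sum_eq_zero; intro j _
      rw [t2x_zero P (by rintro ⟨h, -⟩; exact htne h), mul_zero]
    have hmain : (∑ i ∈ P.Iall, ∑ j ∈ P.Iall.erase i, P.d i j * t2x P i j (P.T - 2))
        = ∑ k ∈ Finset.range (P.Nb + 1), P.d k ((k + 1) % (P.Nb + 1)) := by
      rw [← hIallr]
      apply Finset.sum_congr rfl
      intro i hi
      have hi2 := hIall.mp hi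
      rw [Finset.sum_eq_single_of_mem ((i + 1) % (P.Nb + 1))
        (Finset.mem_erase.mpr ⟨hmodne i hi2, hIall.mpr (hmodle i)⟩)
        (fun j _ hjne => by
          rw [t2x_zero P (by rintro ⟨-, -, h⟩; exact hjne h), mul_zero]),
        t2x_pos P rfl hi2 rfl, mul_one]
    simp only [profit, subObj, hR0, zero_mul, zero_sub, t2sol_x, id_eq]
    rw [Finset.sum_eq_single_of_mem (P.T - 2)
      (Finset.mem_Icc.mpr ⟨by omega, by omega⟩)
      (fun t ht htne => hzero t ht htne), hmain]
    ring
end
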